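/- arXiv:1008.2226 — 5 statements merged into one kernel-verified Lean document; each statement's English description precedes it below -/
import Mathlib

section
/- Let A, B, C, D be real numbers with A > 0 and B > 0, and let β ≠ 0 be real. Then the equation A·t·exp(β t) + B·exp(β t) + C·t + D = 0 has at most 3 real solutions t. Consequently, if A k e^{kβ} + B e^{kβ} + C k + D = 0 holds for all integers k with 0 ≤ k ≤ K where K ≥ 3, then β = 0. -/
open Real Set

/-!
By Rolle's theorem, a differentiable function on `ℝ` has at most one more zero than its
derivative. For `f t = (A t + B) e^{β t} + C t + D` the second derivative is
`(A β² t + 2 A β + B β²) e^{β t}`, which vanishes at most once when `A β ≠ 0`, so `f` has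
at most three zeros. The integers `0, 1, 2, 3` would be four of them.
-/

theorem natCast_le_encard_of_injective {α : Type*} {s : Set α} {m : ℕ} {x : Fin m → α}
    (hx : Function.Injective x) (hxs : ∀ i, x i ∈ s) : (m : ℕ∞) ≤ s.encard :=
  calc (m : ℕ∞) = ENat.card (Fin m) := by simp
    _ ≤ (range x).encard := hx.encard_range
    _ ≤ s.encard := encard_le_encard (range_subset_iff.2 hxs)

theorem exists_strictMono_fin_of_le_encard {α : Type*} [LinearOrder α] {s : Set α} {m : ℕ}
    (h : (m : ℕ∞) ≤ s.encard) : ∃ x : Fin m → α, StrictMono x ∧ ∀ i, x i ∈ s := by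
  obtain ⟨t, hts, htm⟩ := exists_subset_encard_eq h
  have ht : t.Finite := finite_of_encard_eq_coe htm
  have hcard : ht.toFinset.card = m := by
    simpa [ht.encard_eq_coe_toFinset_card] using htm
  exact ⟨ht.toFinset.orderEmbOfFin hcard, (ht.toFinset.orderEmbOfFin hcard).strictMono,
    fun i => hts (ht.mem_toFinset.1 (ht.toFinset.orderEmbOfFin_mem hcard i))⟩

section Rolle

variable {f f' : ℝ → ℝ}

theorem exists_strictMono_hasDerivAt_eq_zero (hf : ∀ t, HasDerivAt f (f' t) t) {n : ℕ}
    {x : Fin (n + 1) → ℝ} (hx : StrictMono x) (hfx : ∀ i, f (x i) = 0) :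
    ∃ y : Fin n → ℝ, StrictMono y ∧ ∀ i, f' (y i) = 0 := by
  have hrolle : ∀ i : Fin n, ∃ c ∈ Ioo (x i.castSucc) (x i.succ), f' c = 0 := fun i =>
    exists_hasDerivAt_eq_zero (hx Fin.castSucc_lt_succ)
      (fun t _ => (hf t).continuousAt.continuousWithinAt)
      ((hfx _).trans (hfx _).symm) fun t _ => hf t
  choose y hy hy0 using hrolle
  refine ⟨y, fun i j hij => ?_, hy0⟩
  calc y i < x i.succ := (hy i).2
    _ ≤ x j.castSucc := hx.monotone (Fin.succ_le_castSucc_iff.2 hij)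
    _ < y j := (hy j).1

theorem encard_zeros_le_succ_of_hasDerivAt (hf : ∀ t, HasDerivAt f (f' t) t) {n : ℕ}
    (hf' : {t | f' t = 0}.encard ≤ n) : {t | f t = 0}.encard ≤ n + 1 := by
  by_contra! hlt
  obtain ⟨x, hx, hfx⟩ :=
    exists_strictMono_fin_of_le_encard (m := n + 2) (Order.add_one_le_of_lt hlt)
  obtain ⟨y, hy, hf'y⟩ := exists_strictMono_hasDerivAt_eq_zero hf hx hfx
  have := (natCast_le_encard_of_injective hy.injective hf'y).trans hf'
  norm_cast at this
  omega

end Rolle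

theorem hasDerivAt_affine_mul_exp (a b β t : ℝ) :
    HasDerivAt (fun t => (a * t + b) * exp (β * t))
      ((a * β * t + (a + b * β)) * exp (β * t)) t := by
  have hexp : HasDerivAt (fun t => exp (β * t)) (exp (β * t) * β) t := by
    simpa using ((hasDerivAt_id' t).const_mul β).exp
  exact ((((hasDerivAt_id' t).const_mul a).add_const b).mul hexp).congr_deriv (by ring)

theorem encard_zeros_affine_mul_exp_le_one {a : ℝ} (ha : a ≠ 0) (b β : ℝ) :
    {t | (a * t + b) * exp (β * t) = 0}.encard ≤ 1 := by
  refine encard_le_one_iff.2 fun u v hu hv => ?_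
  have hu : a * u + b = 0 := by simpa [exp_ne_zero] using hu
  have hv : a * v + b = 0 := by simpa [exp_ne_zero] using hv
  exact mul_left_cancel₀ ha (by linarith)

theorem encard_zeros_affine_mul_exp_add_affine_le_three {a β : ℝ} (ha : a ≠ 0) (hβ : β ≠ 0)
    (b c d : ℝ) : {t | (a * t + b) * exp (β * t) + c * t + d = 0}.encard ≤ 3 := by
  have hf' : ∀ t, HasDerivAt (fun t => (a * t + b) * exp (β * t) + c * t + d)
      ((a * β * t + (a + b * β)) * exp (β * t) + c) t := fun t => by
    simpa using (((hasDerivAt_affine_mul_exp a b β t).add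
      ((hasDerivAt_id t).const_mul c)).add_const d)
  have hf'' : ∀ t, HasDerivAt (fun t => (a * β * t + (a + b * β)) * exp (β * t) + c)
      ((a * β * β * t + (a * β + (a + b * β) * β)) * exp (β * t)) t := fun t =>
    (hasDerivAt_affine_mul_exp _ _ β t).add_const c
  exact encard_zeros_le_succ_of_hasDerivAt (n := 2) hf'
    (encard_zeros_le_succ_of_hasDerivAt (n := 1) hf''
      (encard_zeros_affine_mul_exp_le_one (mul_ne_zero (mul_ne_zero ha hβ) hβ) _ _))

theorem at_most_three_roots_and_beta_eq_zero_general
    (A B C D β : ℝ) (hA : 0 < A) :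
    (β ≠ 0 → {t : ℝ | A * t * exp (β * t) + B * exp (β * t) + C * t + D = 0}.encard ≤ 3) ∧
    (∀ K : ℕ, 3 ≤ K →
      (∀ k : ℕ, k ≤ K →
        A * k * exp (β * k) + B * exp (β * k) + C * k + D = 0) → β = 0) := by
  have hS : ∀ t : ℝ, A * t * exp (β * t) + B * exp (β * t) + C * t + D
      = (A * t + B) * exp (β * t) + C * t + D := fun t => by ring
  have hle (hβ : β ≠ 0) := encard_zeros_affine_mul_exp_add_affine_le_three hA.ne' hβ B C D
  simp only [← hS] at hle
  refine ⟨hle, fun K hK hroots => by_contra fun hβ => (hle hβ).not_gt ?_⟩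
  refine lt_of_lt_of_le (by norm_num) (natCast_le_encard_of_injective (m := 4)
    (x := fun i => ((i : ℕ) : ℝ)) (fun i j hij => Fin.ext ?_) fun i => hroots i (by omega))
  exact_mod_cast (show ((i : ℕ) : ℝ) = j from hij)

/-- For A, B > 0 and β ≠ 0, the equation A t e^{βt} + B e^{βt} + C t + D = 0 has at most
3 real solutions; consequently if it holds at all integers 0 ≤ k ≤ K with K ≥ 3 then β = 0. -/
theorem at_most_three_roots_and_beta_eq_zero
    (A B C D β : ℝ) (hA : 0 < A) (hB : 0 < B) :
    (β ≠ 0 → {t : ℝ | A * t * exp (β * t) + B * exp (β * t) + C * t + D = 0}.encard ≤ 3) ∧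
    (∀ K : ℕ, 3 ≤ K →
      (∀ k : ℕ, k ≤ K →
        A * k * exp (β * k) + B * exp (β * k) + C * k + D = 0) → β = 0) :=
  at_most_three_roots_and_beta_eq_zero_general A B C D β hA
end

section
/- Let N ≥ 4 and let λ₀ > 0 and λ₁, β* be reals. If λ_k = k(λ₁ - λ₀) + λ₀ for 1 ≤ k ≤ N and λ_k = ((N-k)/N) λ₀ e^{k β*} for 0 ≤ k ≤ N-1, then β* = 0. -/
open Real

/-- If λ_k = k(λ₁ - λ₀) + λ₀ for 1 ≤ k ≤ N and λ_k = ((N-k)/N) λ₀ e^{k β*} for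
0 ≤ k ≤ N-1, with λ₀ > 0 and N ≥ 4, then β* = 0. -/
theorem model_I_coefficients_force_beta_zero
    (N : ℕ) (hN : 4 ≤ N) (lam : ℕ → ℝ) (β : ℝ)
    (hpos : 0 < lam 0)
    (h1 : ∀ k : ℕ, 1 ≤ k → k ≤ N → lam k = k * (lam 1 - lam 0) + lam 0)
    (h2 : ∀ k : ℕ, k ≤ N - 1 → lam k = ((N : ℝ) - k) / N * lam 0 * exp (k * β)) :
    β = 0 := by
  have hN3 : 3 ≤ N - 1 := by omega
  have hNR : (4 : ℝ) ≤ (N : ℝ) := by exact_mod_cast hN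
  have hNpos : (0 : ℝ) < (N : ℝ) := by linarith
  set x := exp β with hxdef
  have hx : 0 < x := exp_pos β
  have e2x : exp ((2 : ℕ) * β) = x * x := by
    push_cast; rw [two_mul, exp_add]
  have e3x : exp ((3 : ℕ) * β) = x * x * x := by
    push_cast
    have : (3 : ℝ) * β = β + β + β := by ring
    rw [this, exp_add, exp_add]
  have h21 := h2 1 (by omega)
  have h22 := h2 2 (by omega)
  have h23 := h2 3 (by omega)
  rw [e2x] at h22
  rw [e3x] at h23
  have h12 := h1 2 (by omega) (by omega)
  have h13 := h1 3 (by omega) (by omega)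
  push_cast at h21 h22 h23 h12 h13
  -- second differences vanish
  have E1 : lam 0 - 2 * lam 1 + lam 2 = 0 := by linarith
  have E2 : lam 1 - 2 * lam 2 + lam 3 = 0 := by linarith
  rw [h21, h22] at E1
  rw [h21, h22, h23] at E2
  have hNne : (N : ℝ) ≠ 0 := ne_of_gt hNpos
  field_simp at E1 E2
  have hsq : (x - 1) ^ 2 = 0 := by
    have key : lam 0 * x * (x - 1) ^ 2 = 0 := by nlinarith [E1, E2, mul_pos hpos hx]
    have hne : lam 0 * x ≠ 0 := ne_of_gt (mul_pos hpos hx)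
    have := mul_eq_zero.mp key
    tauto
  have hx1 : x = 1 := by nlinarith [hsq]
  have : exp β = exp 0 := by rw [exp_zero]; exact hx1
  exact exp_injective this
end

section
/- Let M, N be positive integers, r, λ̂₁₀, λ̂₀₀ > 0 reals, and β* real. Suppose λ̂_{m,n} + λ̌_{m,n} = r(1 - (m+n)/(M+N)) for all 0 ≤ m ≤ M, 0 ≤ n ≤ N, with λ̌_{0,n} = ((N-n)/M) λ̂₀₀ for 0 ≤ n ≤ N, λ̂_{m,0} = ((M-m)/M) λ̂₀₀ for 0 ≤ m ≤ M, and the recursion ((m+n)/M) λ̂₀₀ = (m/(M-m+1)) λ̂_{m-1,n} e^{-nβ*} + (n/(N-n+1)) λ̌_{m,n-1} e^{-mβ*} for 1 ≤ m+n, with λ̂₀₀ > 0. Then evaluating at (m,n) = (1,1) and (m,n) = (2,0) forces λ̌_{1,0} = (N/M) λ̂₀₀ (2e^{β*} − 1) and λ̌_{1,0} = (N/M) λ̂₀₀, hence β* = 0. -/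
/-!
The boundary data and the conservation law `λ̂ + λ̌ = r (1 - (m + n)/(M + N))` at `(0,0)`, `(0,1)`
and `(1,0)` pin down `r = (M + N)/M · λ̂₀₀`, `λ̂₀₁ = λ̂₀₀` and `λ̌₁₀ = (N/M) λ̂₀₀`. Feeding `λ̂₀₁ = λ̂₀₀`
into the recursion at `(1,1)` gives instead `λ̌₁₀ = (N/M) λ̂₀₀ (2e^{β} - 1)`, and comparing the two
values of `λ̌₁₀` forces `e^{β} = 1`.
-/

open Real

namespace ModelII

section Boundary

variable {M N : ℕ} {r : ℝ}

theorem conservation_rhs_one_eq (hM : (M : ℝ) ≠ 0) (hMN : (M : ℝ) + N ≠ 0) {lam c : ℝ}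
    (hsum : lam + c = r) (hc : c = (N : ℝ) / M * lam) :
    r * (1 - 1 / ((M : ℝ) + N)) = ((M : ℝ) + N - 1) / M * lam := by
  rw [← hsum, hc]
  field_simp

variable {lamh lamc : ℕ → ℕ → ℝ} (hM : 1 ≤ M) (hN : 1 ≤ N)
    (hsum : ∀ m ≤ M, ∀ n ≤ N,
      lamh m n + lamc m n = r * (1 - ((m : ℝ) + n) / ((M : ℝ) + N)))
    (h0n : ∀ n ≤ N, lamc 0 n = (((N : ℝ) - n) / M) * lamh 0 0)
    (hm0 : ∀ m ≤ M, lamh m 0 = (((M : ℝ) - m) / M) * lamh 0 0)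
include hM hsum h0n

theorem conservation_rhs_one_eq_of_system :
    r * (1 - 1 / ((M : ℝ) + N)) = ((M : ℝ) + N - 1) / M * lamh 0 0 := by
  have hM0 : (M : ℝ) ≠ 0 := by positivity
  refine conservation_rhs_one_eq hM0 (by positivity) (c := lamc 0 0) ?_ ?_
  · simpa using hsum 0 M.zero_le 0 N.zero_le
  · simpa using h0n 0 N.zero_le

include hN in
theorem lamh_zero_one : lamh 0 1 = lamh 0 0 := by
  have h := hsum 0 M.zero_le 1 hN
  rw [h0n 1 hN] at h
  push_cast at h
  rw [zero_add, conservation_rhs_one_eq_of_system hM hsum h0n] at h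
  have hM0 : (M : ℝ) ≠ 0 := by positivity
  field_simp at h
  exact mul_right_cancel₀ hM0 (by linarith)

include hm0 in
theorem lamc_one_zero : lamc 1 0 = (N : ℝ) / M * lamh 0 0 := by
  have h := hsum 1 hM 0 N.zero_le
  rw [hm0 1 hM] at h
  push_cast at h
  rw [add_zero, conservation_rhs_one_eq_of_system hM hsum h0n] at h
  have hM0 : (M : ℝ) ≠ 0 := by positivity
  field_simp at h ⊢
  linarith

end Boundary

theorem lamc_one_zero_of_rec {M N : ℕ} (hM : (M : ℝ) ≠ 0) (hN : (N : ℝ) ≠ 0) {β lam c : ℝ}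
    (hrec : 2 / M * lam = 1 / M * lam * exp (-β) + 1 / N * c * exp (-β)) :
    c = (N : ℝ) / M * lam * (2 * exp β - 1) := by
  have hexp : exp β * exp (-β) = 1 := by rw [← exp_add, add_neg_cancel, exp_zero]
  field_simp at hrec ⊢
  linear_combination -exp β * hrec - (c * M + lam * N) * hexp

end ModelII

theorem model_II_system_forces_beta_zero_general
    (M N : ℕ) (hM : 2 ≤ M) (hN : 2 ≤ N)
    (r β : ℝ)
    (lamh lamc : ℕ → ℕ → ℝ)
    (hlam00 : 0 < lamh 0 0)
    (hsum : ∀ m ≤ M, ∀ n ≤ N,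
      lamh m n + lamc m n = r * (1 - ((m : ℝ) + n) / ((M : ℝ) + N)))
    (h0n : ∀ n ≤ N, lamc 0 n = (((N : ℝ) - n) / M) * lamh 0 0)
    (hm0 : ∀ m ≤ M, lamh m 0 = (((M : ℝ) - m) / M) * lamh 0 0)
    (hrec : ∀ m ≤ M, ∀ n ≤ N, 1 ≤ m + n →
      ((m : ℝ) + n) / M * lamh 0 0 =
        (m : ℝ) / ((M : ℝ) - m + 1) * (if m = 0 then 0 else lamh (m - 1) n) * exp (-(n : ℝ) * β)
        + (n : ℝ) / ((N : ℝ) - n + 1) * (if n = 0 then 0 else lamc m (n - 1)) * exp (-(m : ℝ) * β)) :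
    lamc 1 0 = (N : ℝ) / M * lamh 0 0 * (2 * exp β - 1) ∧
    lamc 1 0 = (N : ℝ) / M * lamh 0 0 ∧
    β = 0 := by
  have hM1 : 1 ≤ M := by omega
  have hN1 : 1 ≤ N := by omega
  have hrec11 := hrec 1 hM1 1 hN1 le_add_self
  simp only [one_ne_zero, if_false, Nat.sub_self, Nat.cast_one, sub_add_cancel, neg_one_mul,
    one_add_one_eq_two, ModelII.lamh_zero_one hM1 hN1 hsum h0n] at hrec11
  have first := ModelII.lamc_one_zero_of_rec (by positivity) (by positivity) hrec11
  have second := ModelII.lamc_one_zero hM1 hsum h0n hm0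
  refine ⟨first, second, ?_⟩
  have hscale : (N : ℝ) / M * lamh 0 0 ≠ 0 := by positivity
  have hexp : exp β = 1 := by
    have := first.symm.trans second
    rw [mul_eq_left₀ hscale] at this
    linarith
  exact exp_eq_one_iff β |>.mp hexp

/-- Model II coefficient system: the stated system of equations for λ̂_{m,n}, λ̌_{m,n}
forces β* = 0 (via (m,n) = (1,1) and (2,0)). -/
theorem model_II_system_forces_beta_zero
    (M N : ℕ) (hM : 2 ≤ M) (hN : 2 ≤ N)
    (r β : ℝ) (hr : 0 < r)
    (lamh lamc : ℕ → ℕ → ℝ)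
    (hlam00 : 0 < lamh 0 0)
    (hlam10 : 0 < lamc 1 0)
    (hsum : ∀ m ≤ M, ∀ n ≤ N,
      lamh m n + lamc m n = r * (1 - ((m : ℝ) + n) / ((M : ℝ) + N)))
    (h0n : ∀ n ≤ N, lamc 0 n = (((N : ℝ) - n) / M) * lamh 0 0)
    (hm0 : ∀ m ≤ M, lamh m 0 = (((M : ℝ) - m) / M) * lamh 0 0)
    (hrec : ∀ m ≤ M, ∀ n ≤ N, 1 ≤ m + n →
      ((m : ℝ) + n) / M * lamh 0 0 =
        (m : ℝ) / ((M : ℝ) - m + 1) * (if m = 0 then 0 else lamh (m - 1) n) * exp (-(n : ℝ) * β)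
        + (n : ℝ) / ((N : ℝ) - n + 1) * (if n = 0 then 0 else lamc m (n - 1)) * exp (-(m : ℝ) * β)) :
    lamc 1 0 = (N : ℝ) / M * lamh 0 0 * (2 * exp β - 1) ∧
    lamc 1 0 = (N : ℝ) / M * lamh 0 0 ∧
    β = 0 :=
  model_II_system_forces_beta_zero_general M N hM hN r β lamh lamc hlam00 hsum h0n hm0 hrec
end

section
/- Let β* ∈ ℝ, N ≥ 4, and suppose real numbers λ_0, ..., λ_N with λ_ℓ > 0 for 0 ≤ ℓ ≤ N−1 and λ_N = 0 satisfy, for every k with 1 ≤ k ≤ N and all t in an open interval where a non-constant continuous function α is defined: k[(λ₀−λ₁) + (λ₀/N) e^{−α(t)}] = (λ₀−λ_k) + λ_{k−1} (k/(N−k+1)) e^{−α(t) − (k−1)β*}. Then β* = 0. -/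
open Real Set

/-- If a non-constant continuous α on a nonempty open interval satisfies, for every
1 ≤ k ≤ N, the identity k[(λ₀−λ₁) + (λ₀/N)e^{−α(t)}] = (λ₀−λ_k) +
λ_{k−1}(k/(N−k+1))e^{−α(t)−(k−1)β*}, with λ_ℓ > 0 for ℓ ≤ N−1 and λ_N = 0 and N ≥ 4,
then β* = 0. -/
theorem model_I_identity_forces_beta_zero
    (N : ℕ) (hN : 4 ≤ N) (lam : ℕ → ℝ) (β : ℝ)
    (hpos : ∀ ℓ : ℕ, ℓ ≤ N - 1 → 0 < lam ℓ) (hlamN : lam N = 0)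
    (a b : ℝ) (hab : a < b)
    (α : ℝ → ℝ) (hcont : ContinuousOn α (Ioo a b))
    (hnc : ∃ s ∈ Ioo a b, ∃ t ∈ Ioo a b, α s ≠ α t)
    (hid : ∀ k : ℕ, 1 ≤ k → k ≤ N → ∀ t ∈ Ioo a b,
      (k : ℝ) * ((lam 0 - lam 1) + (lam 0 / N) * exp (-α t)) =
        (lam 0 - lam k) +
          lam (k - 1) * ((k : ℝ) / ((N : ℝ) - k + 1)) * exp (-α t - ((k : ℝ) - 1) * β)) :
    β = 0 := by
  obtain ⟨s, hs, t, ht, hst⟩ := hnc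
  have hx : exp (-α s) ≠ exp (-α t) := fun h =>
    hst (neg_injective (Real.exp_eq_exp.mp h))
  have hl0 : 0 < lam 0 := hpos 0 (by omega)
  have hl1 : 0 < lam 1 := hpos 1 (by omega)
  have hNR : (4:ℝ) ≤ (N:ℝ) := by exact_mod_cast hN
  -- coefficient matching
  have coeff : ∀ k : ℕ, 1 ≤ k → k ≤ N →
      (k:ℝ) * (lam 0 / N) =
        lam (k-1) * ((k:ℝ)/((N:ℝ)-k+1)) * exp (-((k:ℝ)-1)*β) := by
    intro k h1 h2
    have e1 := hid k h1 h2 s hs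
    have e2 := hid k h1 h2 t ht
    rw [show (-α s - ((k:ℝ)-1)*β) = -α s + (-((k:ℝ)-1)*β) by ring, Real.exp_add] at e1
    rw [show (-α t - ((k:ℝ)-1)*β) = -α t + (-((k:ℝ)-1)*β) by ring, Real.exp_add] at e2
    have hsub : ((k:ℝ) * (lam 0 / N) -
        lam (k-1) * ((k:ℝ)/((N:ℝ)-k+1)) * exp (-((k:ℝ)-1)*β)) *
        (exp (-α s) - exp (-α t)) = 0 := by linear_combination e1 - e2
    rcases mul_eq_zero.mp hsub with h | h
    · linarith
    · exact absurd (sub_eq_zero.mp h) hx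
  -- constant term at k = N gives N(λ₀−λ₁) = λ₀
  have eN := hid N (by omega) le_rfl s hs
  rw [show (-α s - ((N:ℝ)-1)*β) = -α s + (-((N:ℝ)-1)*β) by ring, Real.exp_add] at eN
  have cN := coeff N (by omega) le_rfl
  have hlam1 : (N:ℝ) * (lam 0 - lam 1) = lam 0 := by
    have := hlamN
    linear_combination eN - exp (-α s) * cN - this
  have lam1eq : lam 1 * (N:ℝ) = lam 0 * ((N:ℝ)-1) := by linear_combination -hlam1
  -- coefficient at k = 2 gives exp(-β) = 1
  have c2 := coeff 2 (by omega) (by omega)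
  norm_num at c2
  -- c2 : 2 * (lam 0 / N) = lam 1 * (2/((N:ℝ)-1)) * exp (-β)  (roughly)
  have hN0 : (N:ℝ) ≠ 0 := by linarith
  have hN1 : ((N:ℝ) - 2 + 1) ≠ 0 := by linarith
  have key : lam 0 * ((N:ℝ)-1) * exp (-β) = lam 0 * ((N:ℝ)-1) := by
    field_simp at c2
    nlinarith [c2, lam1eq, Real.exp_pos (-β)]
  have hexp : exp (-β) = 1 := by
    have hpos' : 0 < lam 0 * ((N:ℝ)-1) := by nlinarith
    have := mul_left_cancel₀ (ne_of_gt hpos') (by linarith [key] : lam 0 * ((N:ℝ)-1) * exp (-β) = lam 0 * ((N:ℝ)-1) * 1)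
    exact this
  have : -β = 0 := by rw [← Real.exp_zero] at hexp; exact Real.exp_injective hexp
  linarith
end

section
/- Non-existence for the fully symmetric model: for N ≥ 4, suppose there exist positive reals λ_0, ..., λ_{N−1} with λ_N = 0, a differentiable function α and a continuous function β on (0, T] such that k α'(t) + (k(k−1)/2) β'(t) = (λ₀ − λ_k) + λ_{k−1} (k/(N−k+1)) e^{−α(t) − (k−1)β(t)} for all 1 ≤ k ≤ N and t ∈ (0,T], with α as the (non-constant) solution of α' = (λ₀−λ₁) + (λ₀/N)e^{−α} with e^{α(t)} → 0 as t → 0⁺. Then β(t) = 0 for all t; in particular β(T) = 0. -/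
open Real Set Filter Topology

/-!
Write `x = e^{-α}` and `y = e^{-β}`. Equation `k`, minus `k(k-1)/2` times equation `2`, plus
`k(k-2)` times equation `1`, no longer involves `α'` and `β'`: it reads `x Q_k(y) = K_k` for a
polynomial `Q_k` of degree `k - 1` and a constant `K_k`. Comparing `k = 3` with `k = N ≥ 4`, every
value `y(t)` is a root of one fixed nonzero polynomial, so the continuous `β` is constant and
`β' = 0`. The equations are then affine in `x`, which takes two distinct values because
`e^{α} → 0` at `0⁺`; matching coefficients for `k = N` gives `N λ₁ = (N - 1) λ₀`, and for `k = 2`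
this forces `y = 1`.
-/

open Polynomial in
theorem IsPreconnected.subsingleton_image_of_isRoot {X R : Type*} [TopologicalSpace X]
    [CommRing R] [IsDomain R] [TopologicalSpace R] [T1Space R] {s : Set X}
    (hs : IsPreconnected s) {f : X → R} (hf : ContinuousOn f s) {P : R[X]} (hP : P ≠ 0)
    (hroot : ∀ t ∈ s, P.IsRoot (f t)) : (f '' s).Subsingleton := by
  have hfin : (f '' s).Finite :=
    (finite_setOfPred_isRoot hP).subset (image_subset_iff.mpr hroot)
  exact not_nontrivial_iff.mp fun h ↦ (hs.image f hf).infinite_of_nontrivial h hfin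

open Polynomial in
/-- Take `R = P` when `k = 0`, and `R = k Q - l P` otherwise; the latter is nonzero because `Q`
has a coefficient that `P` lacks. -/
theorem exists_ne_zero_isRoot_of_mul_eval_eq {K : Type*} [CommRing K] [IsDomain K]
    {P Q : K[X]} (hP : P ≠ 0) {n : ℕ} (hQn : Q.coeff n ≠ 0) (hPn : P.coeff n = 0) (k l : K) :
    ∃ R : K[X], R ≠ 0 ∧ ∀ x y : K, x ≠ 0 → x * P.eval y = k → x * Q.eval y = l →
      R.IsRoot y := by
  by_cases hk : k = 0
  · refine ⟨P, hP, fun x y hx hPy _ ↦ ?_⟩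
    exact (mul_eq_zero.mp (hPy.trans hk)).resolve_left hx
  · refine ⟨C k * Q - C l * P, fun h ↦ ?_, fun x y hx hPy hQy ↦ ?_⟩
    · simpa [hPn, hk, hQn] using congrArg (coeff · n) h
    · simp only [IsRoot, eval_sub, eval_mul, eval_C, ← hPy, ← hQy]
      ring

theorem exists_mem_Ioo_lt_of_tendsto {g : ℝ → ℝ} {a b c : ℝ}
    (hg : Tendsto g (𝓝[>] a) (𝓝 b)) (hac : a < c) (hb : b < g c) :
    ∃ t ∈ Ioo a c, g t < g c :=
  (Eventually.and (Ioo_mem_nhdsGT hac) (hg.eventually_lt_const hb)).exists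

namespace SymmetricModel

open Polynomial

variable (N : ℕ) (lam : ℕ → ℝ)

noncomputable def intensity (k : ℕ) : ℝ := lam (k - 1) * (k / ((N : ℝ) - k + 1))

/-- Equation `k` at one time, in the variables `a = α'`, `b = β'`, `x = e^{-α}`, `y = e^{-β}`. -/
noncomputable def IsSolutionAt (k : ℕ) (a b x y : ℝ) : Prop :=
  (k : ℝ) * a + ((k : ℝ) * ((k : ℝ) - 1) / 2) * b =
    (lam 0 - lam k) + intensity N lam k * x * y ^ (k - 1)

noncomputable def eliminant (k : ℕ) : ℝ[X] :=
  C (intensity N lam k) * X ^ (k - 1) - C ((k : ℝ) * (k - 1) / 2 * intensity N lam 2) * X +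
    C ((k : ℝ) * (k - 2) * intensity N lam 1)

noncomputable def eliminantConst (k : ℕ) : ℝ :=
  (k : ℝ) * (k - 1) / 2 * (lam 0 - lam 2) - (lam 0 - lam k) - (k : ℝ) * (k - 2) * (lam 0 - lam 1)

variable {N lam}

theorem isSolutionAt_of_exp {k : ℕ} (hk : 1 ≤ k) {a b α β : ℝ}
    (h : (k : ℝ) * a + ((k : ℝ) * ((k : ℝ) - 1) / 2) * b =
      (lam 0 - lam k) + lam (k - 1) * ((k : ℝ) / ((N : ℝ) - k + 1)) *
        exp (-α - ((k : ℝ) - 1) * β)) :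
    IsSolutionAt N lam k a b (exp (-α)) (exp (-β)) := by
  have hexp : exp (-α - ((k : ℝ) - 1) * β) = exp (-α) * exp (-β) ^ (k - 1) := by
    rw [← exp_nat_mul, ← exp_add, Nat.cast_sub hk]
    ring_nf
  rw [IsSolutionAt, h, hexp, intensity]
  ring

theorem mul_eval_eliminant {k : ℕ} {a b x y : ℝ} (h₁ : IsSolutionAt N lam 1 a b x y)
    (h₂ : IsSolutionAt N lam 2 a b x y) (hk : IsSolutionAt N lam k a b x y) :
    x * (eliminant N lam k).eval y = eliminantConst lam k := by
  simp only [IsSolutionAt] at h₁ h₂ hk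
  simp only [eliminant, eliminantConst, eval_add, eval_sub, eval_mul, eval_C, eval_pow, eval_X]
  norm_num at h₁ h₂
  linear_combination -hk + (k : ℝ) * (k - 1) / 2 * h₂ - (k : ℝ) * (k - 2) * h₁

theorem coeff_eliminant_self {k : ℕ} (hk : 3 ≤ k) :
    (eliminant N lam k).coeff (k - 1) = intensity N lam k := by
  have h1 : k - 1 ≠ 1 := by omega
  have h0 : k - 1 ≠ 0 := by omega
  simp only [eliminant, coeff_add, coeff_sub, coeff_C_mul_X_pow, coeff_C_mul_X, coeff_C,
    h1, h0]
  simp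

theorem coeff_eliminant_of_lt {k j : ℕ} (hk : k - 1 < j) (hj : 1 < j) :
    (eliminant N lam k).coeff j = 0 := by
  have h1 : j ≠ 1 := by omega
  have h0 : j ≠ 0 := by omega
  have hk : j ≠ k - 1 := by omega
  simp only [eliminant, coeff_add, coeff_sub, coeff_C_mul_X_pow, coeff_C_mul_X, coeff_C,
    h1, h0, hk]
  simp

theorem intensity_pos {k : ℕ} (hk : 1 ≤ k) (hkN : k ≤ N)
    (hpos : ∀ ℓ : ℕ, ℓ ≤ N - 1 → 0 < lam ℓ) : 0 < intensity N lam k := by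
  have hkN' : (k : ℝ) ≤ N := by exact_mod_cast hkN
  have hk' : (1 : ℝ) ≤ k := by exact_mod_cast hk
  exact mul_pos (hpos _ (by omega)) (div_pos (by linarith) (by linarith))

theorem exists_ne_zero_isRoot_of_isSolutionAt (hN : 4 ≤ N) (hpos : ∀ ℓ : ℕ, ℓ ≤ N - 1 → 0 < lam ℓ) :
    ∃ R : ℝ[X], R ≠ 0 ∧ ∀ a b x y : ℝ, x ≠ 0 →
      (∀ k, 1 ≤ k → k ≤ N → IsSolutionAt N lam k a b x y) → R.IsRoot y := by
  have hcoeff : ∀ k, 3 ≤ k → k ≤ N → (eliminant N lam k).coeff (k - 1) ≠ 0 := fun k hk hkN ↦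
    (coeff_eliminant_self hk).trans_ne (intensity_pos (by omega) hkN hpos).ne'
  have h3 : eliminant N lam 3 ≠ 0 := fun h ↦ hcoeff 3 le_rfl (by omega) (by rw [h, coeff_zero])
  obtain ⟨R, hR, hroot⟩ := exists_ne_zero_isRoot_of_mul_eval_eq h3 (hcoeff N (by omega) le_rfl)
    (coeff_eliminant_of_lt (by omega) (by omega)) (eliminantConst lam 3) (eliminantConst lam N)
  refine ⟨R, hR, fun a b x y hx hsol ↦ hroot x y hx ?_ ?_⟩ <;>
    exact mul_eval_eliminant (hsol 1 le_rfl (by omega)) (hsol 2 (by norm_num) (by omega))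
      (hsol _ (by omega) (by omega))

theorem coeffs_eq_of_isSolutionAt_of_ne {k : ℕ} {a₁ a₂ x₁ x₂ y : ℝ} (hx : x₁ ≠ x₂)
    (h₁ : IsSolutionAt N lam 1 a₁ 0 x₁ y) (h₂ : IsSolutionAt N lam 1 a₂ 0 x₂ y)
    (hk₁ : IsSolutionAt N lam k a₁ 0 x₁ y) (hk₂ : IsSolutionAt N lam k a₂ 0 x₂ y) :
    lam 0 - lam k = k * (lam 0 - lam 1) ∧
      intensity N lam k * y ^ (k - 1) = k * intensity N lam 1 := by
  simp only [IsSolutionAt] at h₁ h₂ hk₁ hk₂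
  norm_num at h₁ h₂
  set d := intensity N lam k * y ^ (k - 1) - k * intensity N lam 1
  have hd : d * (x₁ - x₂) = 0 := by
    linear_combination hk₂ - hk₁ - (k : ℝ) * h₂ + (k : ℝ) * h₁
  have hd : d = 0 := (mul_eq_zero.mp hd).resolve_right (sub_ne_zero.mpr hx)
  constructor
  · linear_combination (k : ℝ) * h₁ - hk₁ - x₁ * hd
  · linear_combination hd

theorem eq_one_of_intensity_mul_eq (hN : 2 ≤ N) (hlam0 : lam 0 ≠ 0) (hlamN : lam N = 0)
    {y : ℝ} (hc : lam 0 - lam N = N * (lam 0 - lam 1))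
    (h2 : intensity N lam 2 * y = 2 * intensity N lam 1) : y = 1 := by
  have hN1 : (N : ℝ) - 1 ≠ 0 := by
    have : (2 : ℝ) ≤ N := by exact_mod_cast hN
    linarith
  have hN0 : (N : ℝ) ≠ 0 := by positivity
  have e1 : intensity N lam 1 = lam 0 / N := by simp [intensity]; ring
  have e2 : intensity N lam 2 = 2 * lam 1 / (N - 1) := by simp [intensity]; ring
  rw [e1, e2] at h2
  rw [hlamN] at hc
  field_simp at h2
  have h : ((N : ℝ) - 1) * lam 0 * (y - 1) = 0 := by
    linear_combination h2 - y * hc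
  simpa [hN1, hlam0, sub_eq_zero] using h

end SymmetricModel

open SymmetricModel in
theorem model_I_no_markovian_dynamics_general
    (N : ℕ) (hN : 4 ≤ N) (T : ℝ) (hT : 0 < T)
    (lam : ℕ → ℝ) (hpos : ∀ ℓ : ℕ, ℓ ≤ N - 1 → 0 < lam ℓ) (hlamN : lam N = 0)
    (α β : ℝ → ℝ)
    (hα0 : Tendsto (fun t => exp (α t)) (𝓝[>] (0 : ℝ)) (𝓝 0))
    (hβcont : ContinuousOn β (Ioc (0 : ℝ) T))
    (hsys : ∀ k : ℕ, 1 ≤ k → k ≤ N → ∀ t ∈ Ioc (0 : ℝ) T,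
      (k : ℝ) * deriv α t + ((k : ℝ) * ((k : ℝ) - 1) / 2) * deriv β t =
        (lam 0 - lam k) +
          lam (k - 1) * ((k : ℝ) / ((N : ℝ) - k + 1)) *
            exp (-α t - ((k : ℝ) - 1) * β t)) :
    ∀ t ∈ Ioc (0 : ℝ) T, β t = 0 := by
  have hsol : ∀ k, 1 ≤ k → k ≤ N → ∀ t ∈ Ioc 0 T,
      IsSolutionAt N lam k (deriv α t) (deriv β t) (exp (-α t)) (exp (-β t)) :=
    fun k hk hkN t ht ↦ isSolutionAt_of_exp hk (hsys k hk hkN t ht)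
  have hT_mem : T ∈ Ioc 0 T := right_mem_Ioc.mpr hT
  have hconst : ∀ t ∈ Ioc 0 T, β t = β T := by
    obtain ⟨R, hR, hroot⟩ := exists_ne_zero_isRoot_of_isSolutionAt hN hpos
    have h := isPreconnected_Ioc.subsingleton_image_of_isRoot hβcont.neg.rexp hR
      fun t ht ↦ hroot _ _ _ _ (exp_ne_zero _) fun k hk hkN ↦ hsol k hk hkN t ht
    exact fun t ht ↦ neg_inj.mp (exp_injective (h ⟨t, ht, rfl⟩ ⟨T, hT_mem, rfl⟩))
  have hsol₀ : ∀ k, 1 ≤ k → k ≤ N → ∀ t ∈ Ioo 0 T,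
      IsSolutionAt N lam k (deriv α t) 0 (exp (-α t)) (exp (-β T)) := by
    intro k hk hkN t ht
    have hβ' : deriv β t = 0 := by
      rw [(eventuallyEq_of_mem (Ioo_mem_nhds ht.1 ht.2)
        fun s hs ↦ hconst s (Ioo_subset_Ioc_self hs)).deriv_eq, deriv_const]
    have ht' := Ioo_subset_Ioc_self ht
    simpa only [hβ', hconst t ht'] using hsol k hk hkN t ht'
  obtain ⟨t, ht, hlt⟩ := exists_mem_Ioo_lt_of_tendsto hα0 (half_pos hT) (exp_pos _)
  have hx : exp (-α t) ≠ exp (-α (T / 2)) := by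
    rw [Ne, exp_eq_exp, neg_inj]
    exact (exp_lt_exp.mp hlt).ne
  have ht' : t ∈ Ioo 0 T := ⟨ht.1, ht.2.trans (half_lt_self hT)⟩
  have hT' : T / 2 ∈ Ioo 0 T := ⟨half_pos hT, half_lt_self hT⟩
  have hcoeffs k (hk : 1 ≤ k) (hkN : k ≤ N) :=
    coeffs_eq_of_isSolutionAt_of_ne hx (hsol₀ 1 le_rfl (by omega) t ht')
      (hsol₀ 1 le_rfl (by omega) _ hT') (hsol₀ k hk hkN t ht') (hsol₀ k hk hkN _ hT')
  have hβT : exp (-β T) = 1 :=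
    eq_one_of_intensity_mul_eq (by omega) (hpos 0 (Nat.zero_le _)).ne' hlamN
    (hcoeffs N (by omega) le_rfl).1 (by simpa using (hcoeffs 2 (by norm_num) (by omega)).2)
  intro s hs
  rw [hconst s hs]
  simpa using hβT

/-- Non-existence of time-homogeneous Markovian dynamics for the fully symmetric model
(Proposition 3.1): if α, β on (0,T] satisfy the displayed system of N ODEs with N ≥ 4,
λ_ℓ > 0 for ℓ ≤ N−1, λ_N = 0, α the non-constant solution of
α' = (λ₀−λ₁) + (λ₀/N)e^{−α} with e^{α(t)} → 0 as t → 0⁺, then β ≡ 0 on (0,T]. -/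
theorem model_I_no_markovian_dynamics
    (N : ℕ) (hN : 4 ≤ N) (T : ℝ) (hT : 0 < T)
    (lam : ℕ → ℝ) (hpos : ∀ ℓ : ℕ, ℓ ≤ N - 1 → 0 < lam ℓ) (hlamN : lam N = 0)
    (α β : ℝ → ℝ)
    (hα : ∀ t ∈ Ioc (0 : ℝ) T,
      HasDerivAt α ((lam 0 - lam 1) + (lam 0 / N) * exp (-α t)) t)
    (hα0 : Tendsto (fun t => exp (α t)) (𝓝[>] (0 : ℝ)) (𝓝 0))
    (hαnc : ∃ s ∈ Ioc (0 : ℝ) T, ∃ t ∈ Ioc (0 : ℝ) T, α s ≠ α t)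
    (hβcont : ContinuousOn β (Ioc (0 : ℝ) T))
    (hβdiff : ∀ t ∈ Ioc (0 : ℝ) T, DifferentiableAt ℝ β t)
    (hsys : ∀ k : ℕ, 1 ≤ k → k ≤ N → ∀ t ∈ Ioc (0 : ℝ) T,
      (k : ℝ) * deriv α t + ((k : ℝ) * ((k : ℝ) - 1) / 2) * deriv β t =
        (lam 0 - lam k) +
          lam (k - 1) * ((k : ℝ) / ((N : ℝ) - k + 1)) *
            exp (-α t - ((k : ℝ) - 1) * β t)) :
    ∀ t ∈ Ioc (0 : ℝ) T, β t = 0 :=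
  model_I_no_markovian_dynamics_general N hN T hT lam hpos hlamN α β hα0 hβcont hsys
end
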